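/- Let {x_n} ⊂ ℝ^d generate P_n = {x_1,...,x_n} with normalized counting measures ν_n = (1/n) Σ_{a ∈ P_n} δ_a. Suppose {P_n} is s-adaptable (i.e., for every t < s, sup_n J_t(P_n) < ∞) and ν_n converges weak-star to some probability measure μ. Then the Hausdorff dimension of the support of μ is at least s. -/

import Mathlib

/-!
Fix `0 ≤ r < t < s`. The empirical measures `ν_n` converge weakly to `μ`, hence `ν_n ⊗ ν_n`
converges weakly to `μ ⊗ μ`. The Riesz kernel `|p - q| ^ (-t)` truncated at height `k` is bounded
and continuous, and its `ν_n ⊗ ν_n`-integral is at most `k / n` (the diagonal) plus `J_t(P_n) ≤ C`.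
Letting `n → ∞` and then `k → ∞` gives `I_t(μ) ≤ C`. Finite energy bounds the potential
`∫ |p - q| ^ (-t) dμ(q)` by some `M` on a set `A` of positive measure in the support; there
`μ (B(p, ρ)) ≤ M ρ ^ t`, and the mass distribution principle gives `dimH A ≥ t`.
-/

open MeasureTheory Finset Filter ENNReal
open scoped NNReal Topology BoundedContinuousFunction
open Metric (closedEBall ediam)

section Empirical

variable {X : Type*} [MeasurableSpace X]

noncomputable def empiricalMeasure (x : ℕ → X) (n : ℕ) : Measure X :=
  (n : ℝ≥0∞)⁻¹ • ∑ i ∈ range n, Measure.dirac (x i)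

instance (x : ℕ → X) (n : ℕ) : IsProbabilityMeasure (empiricalMeasure x (n + 1)) :=
  ⟨by simp [empiricalMeasure, ENNReal.inv_mul_cancel]⟩

/-- `empiricalMeasure x (n + 1)`, bundled; the index is shifted since `empiricalMeasure x 0 = 0`. -/
noncomputable def empiricalProbabilityMeasure (x : ℕ → X) (n : ℕ) : ProbabilityMeasure X :=
  ⟨empiricalMeasure x (n + 1), inferInstance⟩

theorem tendsto_empiricalMeasure_of_forall_integral_tendsto [TopologicalSpace X]
    [OpensMeasurableSpace X] (x : ℕ → X) (μ : Measure X) [IsProbabilityMeasure μ]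
    (hweak : ∀ f : X → ℝ, Continuous f → (∃ C, ∀ p, |f p| ≤ C) →
      Tendsto (fun n => ∫ p, f p ∂empiricalMeasure x n) atTop (𝓝 (∫ p, f p ∂μ))) :
    Tendsto (empiricalProbabilityMeasure x) atTop (𝓝 ⟨μ, inferInstance⟩) :=
  ProbabilityMeasure.tendsto_iff_forall_integral_tendsto.2 fun f =>
    (hweak f f.continuous ⟨‖f‖, f.norm_coe_le_norm⟩).comp (tendsto_add_atTop_nat 1)

variable [MeasurableSingletonClass X]

theorem lintegral_empiricalMeasure (x : ℕ → X) (n : ℕ) (g : X → ℝ≥0∞) :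
    ∫⁻ p, g p ∂empiricalMeasure x n = (n : ℝ≥0∞)⁻¹ * ∑ i ∈ range n, g (x i) := by
  simp [empiricalMeasure]

theorem lintegral_prod_empiricalMeasure_le (x : ℕ → X) (n : ℕ) {f : X × X → ℝ≥0∞}
    (hf : Measurable f) {k : ℝ≥0∞} (hk : ∀ p, f (p, p) ≤ k) :
    ∫⁻ z, f z ∂(empiricalMeasure x (n + 1)).prod (empiricalMeasure x (n + 1)) ≤
      ((n + 1 : ℕ) : ℝ≥0∞)⁻¹ * k + (((n + 1 : ℕ) : ℝ≥0∞) * ((n + 1 : ℕ) - 1))⁻¹ *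
        ∑ i ∈ range (n + 1), ∑ j ∈ (range (n + 1)).erase i, f (x i, x j) := by
  set N : ℝ≥0∞ := ((n + 1 : ℕ) : ℝ≥0∞)
  set S := ∑ i ∈ range (n + 1), ∑ j ∈ (range (n + 1)).erase i, f (x i, x j)
  have hN0 : N ≠ 0 := by simp [N]
  have hNtop : N ≠ ∞ := natCast_ne_top _
  have hdiag : ∑ i ∈ range (n + 1), ∑ j ∈ range (n + 1), f (x i, x j) ≤ N * k + S := by
    calc ∑ i ∈ range (n + 1), ∑ j ∈ range (n + 1), f (x i, x j)
        = ∑ i ∈ range (n + 1), (f (x i, x i) + ∑ j ∈ (range (n + 1)).erase i, f (x i, x j)) :=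
          sum_congr rfl fun i hi => (add_sum_erase _ _ hi).symm
      _ ≤ ∑ _i ∈ range (n + 1), k + S := by
          rw [sum_add_distrib]; gcongr with i; exact hk _
      _ = N * k + S := by simp [N]
  calc ∫⁻ z, f z ∂(empiricalMeasure x (n + 1)).prod (empiricalMeasure x (n + 1))
      = N⁻¹ * N⁻¹ * ∑ i ∈ range (n + 1), ∑ j ∈ range (n + 1), f (x i, x j) := by
        rw [lintegral_prod _ hf.aemeasurable]
        simp only [lintegral_empiricalMeasure, mul_sum, mul_assoc]
        rfl
    _ ≤ N⁻¹ * N⁻¹ * (N * k + S) := by gcongr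
    _ ≤ N⁻¹ * k + (N * (N - 1))⁻¹ * S := by
        rw [mul_add, mul_comm N⁻¹, mul_assoc, ENNReal.inv_mul_cancel_left hN0 hNtop,
          ← ENNReal.mul_inv (Or.inl hN0) (Or.inl hNtop)]
        gcongr
        exact tsub_le_self

end Empirical

section Riesz

variable {X : Type*} [MetricSpace X] [MeasurableSpace X]

noncomputable def rieszPotential (t : ℝ) (μ : Measure X) (p : X) : ℝ≥0∞ :=
  ∫⁻ q, edist p q ^ (-t) ∂μ

noncomputable def rieszEnergy (t : ℝ) (μ : Measure X) : ℝ≥0∞ :=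
  ∫⁻ z, edist z.1 z.2 ^ (-t) ∂μ.prod μ

variable [BorelSpace X] {t : ℝ} {μ : Measure X}

theorem rpow_neg_mul_measure_closedEBall_le (ht : 0 ≤ t) (p : X) (ρ : ℝ≥0∞) :
    ρ ^ (-t) * μ (closedEBall p ρ) ≤ rieszPotential t μ p := by
  refine le_trans (mul_le_mul_right (measure_mono fun q hq => ?_) _)
    (mul_meas_ge_le_lintegral₀ (ENNReal.continuous_rpow_const.measurable.comp
      measurable_edist_right).aemeasurable _)
  simp only [Set.mem_ofPred_eq, ENNReal.rpow_neg]
  exact ENNReal.inv_le_inv.2 (ENNReal.rpow_le_rpow (Metric.mem_closedEBall'.1 hq) ht)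

theorem measure_closedEBall_le_of_rieszPotential_le (ht : 0 < t) {p : X} {M : ℝ≥0}
    (hp : rieszPotential t μ p ≤ M) {ρ : ℝ≥0∞} (hρ : ρ ≠ ∞) :
    μ (closedEBall p ρ) ≤ M * ρ ^ t := by
  have key := (rpow_neg_mul_measure_closedEBall_le ht.le p ρ).trans hp
  rcases eq_or_ne ρ 0 with rfl | hρ0
  -- `0 ^ (-t) = ∞`, so a finite potential leaves no atom at `p`
  · suffices μ (closedEBall p 0) = 0 by rw [this]; exact zero_le
    by_contra hpos
    rw [ENNReal.zero_rpow_of_neg (neg_lt_zero.2 ht), ENNReal.top_mul hpos] at key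
    exact ENNReal.coe_ne_top (top_le_iff.1 key)
  · have h0 : ρ ^ t ≠ 0 := (ENNReal.rpow_pos (pos_iff_ne_zero.2 hρ0) hρ).ne'
    have htop : ρ ^ t ≠ ∞ := ENNReal.rpow_ne_top_of_nonneg ht.le hρ
    calc μ (closedEBall p ρ) = ρ ^ t * (ρ ^ (-t) * μ (closedEBall p ρ)) := by
          rw [← mul_assoc, ENNReal.rpow_neg, ENNReal.mul_inv_cancel h0 htop, one_mul]
      _ ≤ ρ ^ t * M := by gcongr
      _ = M * ρ ^ t := mul_comm _ _

/-- The mass distribution principle. -/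
theorem le_dimH_of_measure_closedEBall_le {ν : Measure X} {A : Set X} (hA : MeasurableSet A)
    (hνA : ν A ≠ 0) (ht : 0 ≤ t) {M : ℝ≥0}
    (hball : ∀ p ∈ A, ∀ ρ ≤ 1, ν (closedEBall p ρ) ≤ M * ρ ^ t) :
    ENNReal.ofReal t ≤ dimH A := by
  -- `M` itself may vanish
  set c : ℝ≥0∞ := M + 1
  have hc0 : c ≠ 0 := by simp [c]
  have hctop : c ≠ ∞ := by simp [c]
  have hfrost : ∀ s : Set X, ediam s ≤ 1 → (c⁻¹ • ν.restrict A) s ≤ ediam s ^ t := by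
    intro s hs
    rw [Measure.smul_apply, Measure.restrict_apply' hA, smul_eq_mul,
      ENNReal.inv_mul_le_iff hc0 hctop]
    rcases (s ∩ A).eq_empty_or_nonempty with hempty | ⟨p, hps, hpA⟩
    · simp [hempty]
    calc ν (s ∩ A) ≤ ν (closedEBall p (ediam s)) :=
          measure_mono fun q hq => Metric.edist_le_ediam_of_mem hq.1 hps
      _ ≤ M * ediam s ^ t := hball p hpA _ hs
      _ ≤ c * ediam s ^ t := by gcongr; exact le_self_add
  have hH : c⁻¹ • ν.restrict A ≤ μH[t] := Measure.le_hausdorffMeasure t _ 1 one_pos hfrost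
  have hpos : μH[(t.toNNReal : ℝ)] A ≠ 0 := by
    rw [Real.coe_toNNReal t ht]
    refine ne_bot_of_le_ne_bot ?_ (hH A)
    simpa [Measure.restrict_apply' hA, hc0, hctop] using hνA
  exact le_dimH_of_hausdorffMeasure_ne_zero hpos

variable [SecondCountableTopology X]

theorem measurable_rieszPotential [SFinite μ] : Measurable (rieszPotential t μ) :=
  (ENNReal.continuous_rpow_const.measurable.comp measurable_edist).lintegral_prod_right'

theorem lintegral_rieszPotential [SFinite μ] :
    ∫⁻ p, rieszPotential t μ p ∂μ = rieszEnergy t μ :=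
  (lintegral_prod _ (ENNReal.continuous_rpow_const.measurable.comp
    measurable_edist).aemeasurable).symm

theorem exists_measure_rieszPotential_le_pos [SFinite μ] [NeZero μ] (hE : rieszEnergy t μ ≠ ∞) :
    ∃ M : ℕ, 0 < μ {p | rieszPotential t μ p ≤ M} := by
  refine exists_measure_pos_of_not_measure_iUnion_null fun h0 => NeZero.ne μ ?_
  rw [← ae_eq_bot, ← eventually_false_iff_eq_bot]
  filter_upwards [ae_lt_top measurable_rieszPotential (by rwa [lintegral_rieszPotential]),
    measure_eq_zero_iff_ae_notMem.1 h0] with p hp hp'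
  exact hp' (Set.mem_iUnion.2 ((ENNReal.exists_nat_gt hp.ne).imp fun _ => le_of_lt))

theorem le_dimH_support_of_rieszEnergy_ne_top [IsFiniteMeasure μ] [NeZero μ] (ht : 0 < t)
    (hE : rieszEnergy t μ ≠ ∞) : ENNReal.ofReal t ≤ dimH μ.support := by
  obtain ⟨M, hM⟩ := exists_measure_rieszPotential_le_pos hE
  set A := {p | rieszPotential t μ p ≤ M} ∩ μ.support
  have hA : MeasurableSet A :=
    (measurable_rieszPotential measurableSet_Iic).inter Measure.isClosed_support.measurableSet
  have hμA : μ A ≠ 0 := by rw [measure_inter_conull Measure.measure_compl_support]; exact hM.ne'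
  refine (le_dimH_of_measure_closedEBall_le hA hμA ht.le (M := M) fun p hp ρ hρ => ?_).trans
    (dimH_mono Set.inter_subset_right)
  exact measure_closedEBall_le_of_rieszPotential_le ht (by exact_mod_cast hp.1)
    (ne_top_of_le_ne_top one_ne_top hρ)

theorem rieszEnergy_eq_iSup_lintegral_min [SFinite μ] :
    rieszEnergy t μ = ⨆ k : ℕ, ∫⁻ z, min (edist z.1 z.2 ^ (-t)) k ∂μ.prod μ := by
  rw [rieszEnergy, ← lintegral_iSup]
  · simp_rw [← inf_iSup_eq, ENNReal.iSup_natCast, min_top_right]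
  · exact fun k => ((ENNReal.continuous_rpow_const.measurable.comp measurable_edist).min
      measurable_const)
  · exact fun k l hkl z => min_le_min_left _ (Nat.cast_le.2 hkl)

theorem tendsto_lintegral_min_prod {ι : Type*} {l : Filter ι} {ν : ι → ProbabilityMeasure X}
    {μ : ProbabilityMeasure X} (hν : Tendsto ν l (𝓝 μ)) (t : ℝ) (k : ℝ≥0) :
    Tendsto (fun i => ∫⁻ z, min (edist z.1 z.2 ^ (-t)) k ∂(ν i : Measure X).prod (ν i)) l
      (𝓝 (∫⁻ z, min (edist z.1 z.2 ^ (-t)) k ∂(μ : Measure X).prod μ)) := by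
  have hfin : ∀ z : X × X, min (edist z.1 z.2 ^ (-t)) k ≠ ∞ := fun z =>
    ne_top_of_le_ne_top coe_ne_top (min_le_right _ _)
  have hle : ∀ z : X × X, (min (edist z.1 z.2 ^ (-t)) k).toNNReal ≤ k := fun z => by
    simpa using ENNReal.toNNReal_mono coe_ne_top (min_le_right _ (k : ℝ≥0∞))
  let K : X × X →ᵇ ℝ≥0 := .mkOfBound
    ⟨fun z => (min (edist z.1 z.2 ^ (-t)) k).toNNReal,
      ENNReal.continuousOn_toNNReal.comp_continuous
        ((ENNReal.continuous_rpow_const.comp continuous_edist).min continuous_const) hfin⟩ k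
    fun z w => abs_sub_le_of_nonneg_of_le (NNReal.coe_nonneg _) (NNReal.coe_le_coe.2 (hle z))
      (NNReal.coe_nonneg _) (NNReal.coe_le_coe.2 (hle w))
  have hK : ∀ z, (K z : ℝ≥0∞) = min (edist z.1 z.2 ^ (-t)) k := fun z => coe_toNNReal (hfin z)
  have := ProbabilityMeasure.tendsto_iff_forall_lintegral_tendsto.1
    ((ProbabilityMeasure.continuous_prod.tendsto (μ, μ)).comp (hν.prodMk_nhds hν)) K
  simpa [hK] using this

theorem rieszEnergy_le_of_tendsto_empiricalMeasure {x : ℕ → X} {μ : ProbabilityMeasure X}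
    (hμ : Tendsto (empiricalProbabilityMeasure x) atTop (𝓝 μ)) {C : ℝ≥0∞}
    (hC : ∀ n : ℕ, 2 ≤ n → ((n : ℝ≥0∞) * ((n : ℝ≥0∞) - 1))⁻¹ *
      ∑ i ∈ range n, ∑ j ∈ (range n).erase i, edist (x i) (x j) ^ (-t) ≤ C) :
    rieszEnergy t (μ : Measure X) ≤ C := by
  rw [rieszEnergy_eq_iSup_lintegral_min]
  refine iSup_le fun k => ?_
  have hlim : Tendsto (fun n : ℕ => ((n + 1 : ℕ) : ℝ≥0∞)⁻¹ * k + C) atTop (𝓝 C) := by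
    simpa using (ENNReal.Tendsto.mul_const (ENNReal.tendsto_inv_nat_nhds_zero.comp
      (tendsto_add_atTop_nat 1)) (Or.inr (natCast_ne_top k))).add_const C
  refine le_of_tendsto_of_tendsto (tendsto_lintegral_min_prod hμ t k) hlim ?_
  filter_upwards [eventually_ge_atTop 1] with n hn
  refine (lintegral_prod_empiricalMeasure_le x n ((ENNReal.continuous_rpow_const.measurable.comp
    measurable_edist).min measurable_const) fun p => min_le_right _ _).trans
    (add_le_add le_rfl (le_trans ?_ (hC (n + 1) (by omega))))
  gcongr
  exact min_le_left _ _

end Riesz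

theorem dimH_support_ge_of_adaptable_general
    {d : ℕ} (x : ℕ → EuclideanSpace ℝ (Fin d))
    (s : ℝ)
    (hadapt : ∀ t : ℝ, 0 ≤ t → t < s → ∃ C : ℝ≥0∞, C ≠ ∞ ∧ ∀ n : ℕ, 2 ≤ n →
      ((n : ℝ≥0∞) * ((n : ℝ≥0∞) - 1))⁻¹ *
          ∑ i ∈ Finset.range n, ∑ j ∈ (Finset.range n).erase i,
            (edist (x i) (x j)) ^ (-t) ≤ C)
    (μ : Measure (EuclideanSpace ℝ (Fin d))) [IsProbabilityMeasure μ]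
    (hweak : ∀ f : EuclideanSpace ℝ (Fin d) → ℝ, Continuous f → (∃ C, ∀ p, |f p| ≤ C) →
      Tendsto (fun n : ℕ =>
          ∫ p, f p ∂((n : ℝ≥0∞)⁻¹ • ∑ i ∈ Finset.range n, Measure.dirac (x i)))
        atTop (nhds (∫ p, f p ∂μ))) :
    ENNReal.ofReal s ≤
      dimH {p : EuclideanSpace ℝ (Fin d) | ∀ r : ℝ, 0 < r → 0 < μ (Metric.ball p r)} := by
  have hsupport : {p | ∀ r : ℝ, 0 < r → 0 < μ (Metric.ball p r)} = μ.support :=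
    Set.ext fun p => Metric.nhds_basis_ball.mem_measureSupport.symm
  rw [hsupport]
  refine ENNReal.le_of_forall_nnreal_lt fun r hr => ?_
  obtain ⟨t, hrt, hts⟩ := exists_between (by simpa using (lt_ofReal_iff_toReal_lt coe_ne_top).1 hr)
  obtain ⟨C, hCtop, hC⟩ := hadapt t (r.2.trans hrt.le) hts
  have hE : rieszEnergy t μ ≠ ∞ :=
    ((rieszEnergy_le_of_tendsto_empiricalMeasure
      (tendsto_empiricalMeasure_of_forall_integral_tendsto x μ hweak) hC).trans_lt hCtop.lt_top).ne
  calc (r : ℝ≥0∞) = ENNReal.ofReal r := ofReal_coe_nnreal.symm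
    _ ≤ ENNReal.ofReal t := ofReal_le_ofReal hrt.le
    _ ≤ dimH μ.support := le_dimH_support_of_rieszEnergy_ne_top (r.2.trans_lt hrt) hE

/-- If a sequence of distinct points generates `s`-adaptable sets `P_n` and the induced
normalized counting measures converge weak-star to a probability measure `μ`, then the
Hausdorff dimension of the support of `μ` is at least `s`. -/
theorem dimH_support_ge_of_adaptable
    {d : ℕ} (x : ℕ → EuclideanSpace ℝ (Fin d)) (hx : Function.Injective x)
    (s : ℝ) (hs : 0 ≤ s)
    (hadapt : ∀ t : ℝ, 0 ≤ t → t < s → ∃ C : ℝ≥0∞, C ≠ ∞ ∧ ∀ n : ℕ, 2 ≤ n →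
      ((n : ℝ≥0∞) * ((n : ℝ≥0∞) - 1))⁻¹ *
          ∑ i ∈ Finset.range n, ∑ j ∈ (Finset.range n).erase i,
            (edist (x i) (x j)) ^ (-t) ≤ C)
    (μ : Measure (EuclideanSpace ℝ (Fin d))) [IsProbabilityMeasure μ]
    (hweak : ∀ f : EuclideanSpace ℝ (Fin d) → ℝ, Continuous f → (∃ C, ∀ p, |f p| ≤ C) →
      Tendsto (fun n : ℕ =>
          ∫ p, f p ∂((n : ℝ≥0∞)⁻¹ • ∑ i ∈ Finset.range n, Measure.dirac (x i)))
        atTop (nhds (∫ p, f p ∂μ))) :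
    ENNReal.ofReal s ≤
      dimH {p : EuclideanSpace ℝ (Fin d) | ∀ r : ℝ, 0 < r → 0 < μ (Metric.ball p r)} :=
  dimH_support_ge_of_adaptable_general x s hadapt μ hweak
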